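/- Let n ≥ 2, R > 0, p ∈ (1, n), and suppose v : [0, R] → ℝ is C¹ with the property that ω_{n-1} ∫_0^R ρ^{n−1}|v_r(ρ)|^p dρ ≤ K^p for some K > 0. Suppose further r_0 ∈ (R/2, R) and v(r_0) ≤ L for some L ≥ 0. Then for all r ∈ (0, R): v(r) ≤ L R^{(n−p)/p} r^{-(n−p)/p} + K ω_{n-1}^{-1/p} 2^{(n−p)/p} ((p−1)/(n−p))^{(p−1)/p} r^{-(n−p)/p}. -/

import Mathlib

open MeasureTheory Metric

set_option maxHeartbeats 800000

/-- `ω_{n-1}`, the surface measure of the unit sphere `S^{n-1} ⊂ ℝⁿ`,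
expressed via the standard identity `ω_{n-1} = n · vol(B_1)`. -/
noncomputable def omegaSphere (n : ℕ) : ℝ :=
  n * (volume (ball (0 : EuclideanSpace ℝ (Fin n)) 1)).toReal

/-- if a radial `C¹` function `v` satisfies
`ω_{n-1} ∫_0^R ρ^{n−1}|v_r(ρ)|^p dρ ≤ K^p`, `r₀ ∈ (R/2, R)` and `v(r₀) ≤ L`, then
`v(r) ≤ L R^{(n−p)/p} r^{−(n−p)/p}
      + K ω_{n-1}^{−1/p} 2^{(n−p)/p} ((p−1)/(n−p))^{(p−1)/p} r^{−(n−p)/p}` on `(0,R)`. -/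
theorem stmt6 (n : ℕ) (hn : 2 ≤ n) (R p K L r₀ : ℝ) (hR : 0 < R) (hp1 : 1 < p) (hpn : p < n)
    (hK : 0 < K) (hL : 0 ≤ L) (hr₀ : r₀ ∈ Set.Ioo (R / 2) R)
    (v : ℝ → ℝ) (hv : ContDiffOn ℝ 1 v (Set.Icc 0 R))
    (hbd : omegaSphere n * ∫ ρ in Set.Ioo (0 : ℝ) R, ρ ^ ((n : ℝ) - 1) * |deriv v ρ| ^ p ≤ K ^ p)
    (hvr₀ : v r₀ ≤ L) :
    ∀ r ∈ Set.Ioo (0 : ℝ) R,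
      v r ≤ L * R ^ (((n : ℝ) - p) / p) * r ^ (-(((n : ℝ) - p) / p))
            + K * (omegaSphere n) ^ (-(1 / p)) * 2 ^ (((n : ℝ) - p) / p) *
              ((p - 1) / ((n : ℝ) - p)) ^ ((p - 1) / p) * r ^ (-(((n : ℝ) - p) / p)) := by
  intro r hr
  obtain ⟨hr0, hrR⟩ := hr
  obtain ⟨hr₀1, hr₀2⟩ := hr₀
  have hp0 : (0:ℝ) < p := by linarith
  have hpm : (0:ℝ) < p - 1 := by linarith
  have hnp : (0:ℝ) < (n:ℝ) - p := by linarith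
  have hn1 : (1:ℝ) < (n:ℝ) := by linarith
  set α : ℝ := ((n:ℝ) - p) / p with hαdef
  have hα0 : 0 < α := div_pos hnp hp0
  set q : ℝ := p / (p - 1) with hqdef
  have hq1 : 1 < q := by
    rw [hqdef, lt_div_iff₀ hpm]; linarith
  have hpq : Real.HolderConjugate p q := by
    rw [hqdef]; exact Real.HolderConjugate.conjExponent hp1
  -- a and b
  set a : ℝ := min r r₀ with hadef
  set b : ℝ := max r r₀ with hbdef
  have ha0 : 0 < a := lt_min hr0 (by linarith)
  have hab : a ≤ b := min_le_max
  have hbR : b < R := max_lt hrR hr₀2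
  have haR : a < R := lt_of_le_of_lt (hab) hbR
  have hra : r / 2 ≤ a := le_min (by linarith) (by linarith)
  -- omega positivity
  have hω : 0 < omegaSphere n := by
    unfold omegaSphere
    apply mul_pos
    · have : 0 < n := by omega
      exact_mod_cast this
    · exact ENNReal.toReal_pos (measure_ball_pos _ _ one_pos).ne' measure_ball_lt_top.ne
  -- continuity of deriv on Ioo 0 R
  have hderivC : ContinuousOn (deriv v) (Set.Ioo 0 R) := by
    apply ContDiffOn.continuousOn_deriv_of_isOpen (hv.mono Set.Ioo_subset_Icc_self) isOpen_Ioo le_rfl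
  have hdiff : ∀ x ∈ Set.Ioo (0:ℝ) R, DifferentiableAt ℝ v x := by
    intro x hx
    exact (hv.differentiableOn one_ne_zero).differentiableAt (Icc_mem_nhds hx.1 hx.2)
  -- Step 1: FTC
  have hsub : Set.uIcc r₀ r ⊆ Set.Ioo 0 R := by
    rw [Set.uIcc_eq_union]
    rintro x hx
    rcases hx with hx | hx
    · exact ⟨lt_of_lt_of_le (by linarith) hx.1, lt_of_le_of_lt hx.2 hrR⟩
    · exact ⟨lt_of_lt_of_le hr0 hx.1, lt_of_le_of_lt hx.2 hr₀2⟩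
  have hIcc_ab : Set.Icc a b ⊆ Set.Ioo 0 R := by
    intro x hx
    exact ⟨lt_of_lt_of_le ha0 hx.1, lt_of_le_of_lt hx.2 hbR⟩
  have hftc : ∫ x in r₀..r, deriv v x = v r - v r₀ := by
    apply intervalIntegral.integral_deriv_eq_sub
    · intro x hx; exact hdiff x (hsub hx)
    · exact (hderivC.mono hsub).intervalIntegrable
  have h1 : v r ≤ L + ∫ x in Set.Ioc a b, |deriv v x| := by
    have h2 : v r - v r₀ ≤ |∫ x in r₀..r, deriv v x| := by
      rw [hftc]; exact le_abs_self _
    have h3 : |∫ x in r₀..r, deriv v x| = |∫ x in a..b, deriv v x| := by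
      rcases le_total r₀ r with h | h
      · rw [hadef, hbdef, min_eq_right h, max_eq_left h]
      · rw [hadef, hbdef, min_eq_left h, max_eq_right h]
        rw [intervalIntegral.integral_symm, abs_neg]
    have h4 : |∫ x in a..b, deriv v x| ≤ ∫ x in a..b, |deriv v x| :=
      intervalIntegral.abs_integral_le_integral_abs hab
    have h5 : ∫ x in a..b, |deriv v x| = ∫ x in Set.Ioc a b, |deriv v x| :=
      intervalIntegral.integral_of_le hab
    have h6 : v r - v r₀ ≤ ∫ x in Set.Ioc a b, |deriv v x| := by
      rw [← h5]
      calc v r - v r₀ ≤ |∫ x in r₀..r, deriv v x| := h2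
        _ = |∫ x in a..b, deriv v x| := h3
        _ ≤ ∫ x in a..b, |deriv v x| := h4
    linarith
  -- Setup for Hölder
  set c : ℝ := ((n:ℝ) - 1) / p with hcdef
  set d : ℝ := -(((n:ℝ) - 1) / (p - 1)) with hddef
  have hd1 : d + 1 = -(((n:ℝ) - p) / (p - 1)) := by
    rw [hddef]; field_simp; ring
  set f : ℝ → ℝ := fun x => x ^ c * |deriv v x| with hfdef
  set g : ℝ → ℝ := fun x => x ^ (-c) with hgdef
  set F : ℝ → ℝ := fun x => x ^ ((n:ℝ) - 1) * |deriv v x| ^ p with hFdef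
  have hIoc_sub : Set.Ioc a b ⊆ Set.Ioo 0 R := fun x hx => hIcc_ab (Set.Ioc_subset_Icc_self hx)
  haveI : IsFiniteMeasure (volume.restrict (Set.Ioc a b)) :=
    ⟨by rw [Measure.restrict_apply_univ]; exact measure_Ioc_lt_top⟩
  -- continuity
  have hconf : ContinuousOn f (Set.Ioo 0 R) := by
    apply ContinuousOn.mul
    · exact continuousOn_id.rpow_const (fun x hx => Or.inl (ne_of_gt hx.1))
    · exact hderivC.abs
  have hcong : ContinuousOn g (Set.Ioo 0 R) :=
    continuousOn_id.rpow_const (fun x hx => Or.inl (ne_of_gt hx.1))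
  have hconF : ContinuousOn F (Set.Ioo 0 R) := by
    apply ContinuousOn.mul
    · exact continuousOn_id.rpow_const (fun x hx => Or.inl (ne_of_gt hx.1))
    · exact (hderivC.abs).rpow_const (fun x hx => Or.inr hp0.le)
  -- Memℒp
  have hmemf : MemLp f (ENNReal.ofReal p) (volume.restrict (Set.Ioc a b)) := by
    obtain ⟨M, hM⟩ := isCompact_Icc.exists_bound_of_continuousOn (hconf.mono hIcc_ab)
    refine MemLp.of_bound ?_ M ?_
    · exact (hconf.mono hIoc_sub).aestronglyMeasurable measurableSet_Ioc
    · exact (ae_restrict_iff' measurableSet_Ioc).2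
        (Filter.Eventually.of_forall fun x hx => hM x (Set.Ioc_subset_Icc_self hx))
  have hmemg : MemLp g (ENNReal.ofReal q) (volume.restrict (Set.Ioc a b)) := by
    obtain ⟨M, hM⟩ := isCompact_Icc.exists_bound_of_continuousOn (hcong.mono hIcc_ab)
    refine MemLp.of_bound ?_ M ?_
    · exact (hcong.mono hIoc_sub).aestronglyMeasurable measurableSet_Ioc
    · exact (ae_restrict_iff' measurableSet_Ioc).2
        (Filter.Eventually.of_forall fun x hx => hM x (Set.Ioc_subset_Icc_self hx))
  -- Hölder
  have hHold : ∫ x in Set.Ioc a b, f x * g x ≤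
      (∫ x in Set.Ioc a b, f x ^ p) ^ (1/p) * (∫ x in Set.Ioc a b, g x ^ q) ^ (1/q) := by
    apply MeasureTheory.integral_mul_le_Lp_mul_Lq_of_nonneg hpq ?_ ?_ hmemf hmemg
    · refine (ae_restrict_iff' measurableSet_Ioc).2 (Filter.Eventually.of_forall fun x hx => ?_)
      have hx0 : (0:ℝ) < x := ha0.trans hx.1
      exact mul_nonneg (Real.rpow_nonneg hx0.le _) (abs_nonneg _)
    · refine (ae_restrict_iff' measurableSet_Ioc).2 (Filter.Eventually.of_forall fun x hx => ?_)
      have hx0 : (0:ℝ) < x := ha0.trans hx.1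
      exact Real.rpow_nonneg hx0.le _
  -- rewrite the three integrals
  have heq1 : ∫ x in Set.Ioc a b, f x * g x = ∫ x in Set.Ioc a b, |deriv v x| := by
    apply setIntegral_congr_fun measurableSet_Ioc
    intro x hx
    have hx0 : (0:ℝ) < x := ha0.trans hx.1
    simp only [hfdef, hgdef]
    rw [mul_comm (x ^ c) _, mul_assoc, ← Real.rpow_add hx0]
    simp
  have heq2 : ∫ x in Set.Ioc a b, f x ^ p = ∫ x in Set.Ioc a b, F x := by
    apply setIntegral_congr_fun measurableSet_Ioc
    intro x hx
    have hx0 : (0:ℝ) < x := ha0.trans hx.1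
    simp only [hfdef, hFdef]
    rw [Real.mul_rpow (Real.rpow_nonneg hx0.le _) (abs_nonneg _), ← Real.rpow_mul hx0.le]
    congr 2
    rw [hcdef]; field_simp; try ring
  have heq3 : ∫ x in Set.Ioc a b, g x ^ q = ∫ x in Set.Ioc a b, x ^ d := by
    apply setIntegral_congr_fun measurableSet_Ioc
    intro x hx
    have hx0 : (0:ℝ) < x := ha0.trans hx.1
    simp only [hgdef]
    rw [← Real.rpow_mul hx0.le]
    congr 1
    rw [hcdef, hddef, hqdef]; field_simp; try ring
  -- bound on A
  have hFint : IntegrableOn F (Set.Ioo 0 R) := by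
    have hcontW : ContinuousOn (derivWithin v (Set.Icc 0 R)) (Set.Icc 0 R) :=
      hv.continuousOn_derivWithin (uniqueDiffOn_Icc hR) le_rfl
    obtain ⟨M, hM⟩ := isCompact_Icc.exists_bound_of_continuousOn hcontW
    have hM0 : 0 ≤ M := le_trans (norm_nonneg _) (hM 0 ⟨le_rfl, hR.le⟩)
    have hd_eq : ∀ x ∈ Set.Ioo (0:ℝ) R, deriv v x = derivWithin v (Set.Icc 0 R) x :=
      fun x hx => (derivWithin_of_mem_nhds (Icc_mem_nhds hx.1 hx.2)).symm
    have hbound : ∀ x ∈ Set.Ioo (0:ℝ) R, ‖F x‖ ≤ R ^ ((n:ℝ)-1) * M ^ p := by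
      intro x hx
      have hx0 : (0:ℝ) < x := hx.1
      have h1 : |deriv v x| ≤ M := by
        rw [hd_eq x hx]
        exact hM x ⟨hx0.le, hx.2.le⟩
      have h2 : x ^ ((n:ℝ)-1) ≤ R ^ ((n:ℝ)-1) :=
        Real.rpow_le_rpow hx0.le hx.2.le (by linarith)
      have h3 : |deriv v x| ^ p ≤ M ^ p :=
        Real.rpow_le_rpow (abs_nonneg _) h1 hp0.le
      have hF0 : 0 ≤ F x := mul_nonneg (Real.rpow_nonneg hx0.le _) (Real.rpow_nonneg (abs_nonneg _) _)
      rw [Real.norm_eq_abs, abs_of_nonneg hF0]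
      apply mul_le_mul h2 h3 (Real.rpow_nonneg (abs_nonneg _) _) (Real.rpow_nonneg hR.le _)
    have hFm : AEStronglyMeasurable F volume := by
      apply Measurable.aestronglyMeasurable
      exact ((Real.continuous_rpow_const (by linarith : (0:ℝ) ≤ (n:ℝ)-1)).measurable).mul
        (((Real.continuous_rpow_const hp0.le).measurable).comp (measurable_deriv v).abs)
    apply Measure.integrableOn_of_bounded (by exact (measure_Ioo_lt_top).ne) hFm
    exact (ae_restrict_iff' measurableSet_Ioo).2 (Filter.Eventually.of_forall hbound)
  have hFnn : ∀ x ∈ Set.Ioo (0:ℝ) R, 0 ≤ F x := fun x hx =>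
    mul_nonneg (Real.rpow_nonneg hx.1.le _) (Real.rpow_nonneg (abs_nonneg _) _)
  have hA_le : ∫ x in Set.Ioc a b, F x ≤ ∫ x in Set.Ioo 0 R, F x := by
    apply setIntegral_mono_set hFint
    · exact (ae_restrict_iff' measurableSet_Ioo).2 (Filter.Eventually.of_forall hFnn)
    · exact HasSubset.Subset.eventuallyLE hIoc_sub
  have hA_bd : ∫ x in Set.Ioo (0:ℝ) R, F x ≤ K ^ p / omegaSphere n := by
    rw [le_div_iff₀ hω]
    calc (∫ x in Set.Ioo (0:ℝ) R, F x) * omegaSphere n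
        = omegaSphere n * ∫ ρ in Set.Ioo (0:ℝ) R, ρ ^ ((n : ℝ) - 1) * |deriv v ρ| ^ p := by
          rw [mul_comm]
      _ ≤ K ^ p := hbd
  have hA0 : 0 ≤ ∫ x in Set.Ioc a b, F x :=
    setIntegral_nonneg measurableSet_Ioc fun x hx => hFnn x (hIoc_sub hx)
  have hA1p : (∫ x in Set.Ioc a b, F x) ^ (1/p) ≤ K * (omegaSphere n) ^ (-(1/p)) := by
    have h1 : (∫ x in Set.Ioc a b, F x) ^ (1/p) ≤ (K ^ p / omegaSphere n) ^ (1/p) :=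
      Real.rpow_le_rpow hA0 (hA_le.trans hA_bd) (by positivity)
    have h2 : (K ^ p / omegaSphere n) ^ (1/p) = K * (omegaSphere n) ^ (-(1/p)) := by
      rw [Real.div_rpow (Real.rpow_nonneg hK.le _) hω.le, ← Real.rpow_mul hK.le,
        mul_one_div_cancel hp0.ne', Real.rpow_one, Real.rpow_neg hω.le, div_eq_mul_inv]
    rw [← h2]; exact h1
  -- bound on B
  have hb0 : 0 < b := ha0.trans_le hab
  have hB_eq : ∫ x in Set.Ioc a b, x ^ d = (b ^ (d+1) - a ^ (d+1)) / (d+1) := by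
    rw [← intervalIntegral.integral_of_le hab]
    apply integral_rpow
    right
    constructor
    · intro h
      rw [h] at hd1
      have : ((n:ℝ) - p) / (p - 1) = 0 := by linarith
      have := div_pos hnp hpm
      linarith
    · rw [Set.uIcc_of_le hab]
      intro h
      exact absurd h.1 (not_le.2 ha0)
  have hB_le : ∫ x in Set.Ioc a b, x ^ d ≤ a ^ (d+1) * ((p-1) / ((n:ℝ) - p)) := by
    rw [hB_eq]
    have hbp : 0 ≤ b ^ (d+1) := Real.rpow_nonneg hb0.le _
    have hinv : (p-1) / ((n:ℝ) - p) = (((n:ℝ)-p)/(p-1))⁻¹ := (inv_div _ _).symm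
    have he0 : 0 < ((n:ℝ)-p)/(p-1) := div_pos hnp hpm
    have key : (b ^ (d+1) - a ^ (d+1)) / (d+1)
        = (a ^ (d+1) - b ^ (d+1)) * ((p-1) / ((n:ℝ) - p)) := by
      rw [hinv]
      rw [hd1, div_neg, ← neg_div, neg_sub, div_eq_mul_inv]
    rw [key]
    apply mul_le_mul_of_nonneg_right (by linarith) (by rw [hinv]; positivity)
  have hB0 : 0 ≤ ∫ x in Set.Ioc a b, x ^ d :=
    setIntegral_nonneg measurableSet_Ioc fun x hx => Real.rpow_nonneg (ha0.trans hx.1).le _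
  have h1q : 1/q = (p-1)/p := by rw [hqdef, one_div_div]
  have hB1q : (∫ x in Set.Ioc a b, x ^ d) ^ (1/q)
      ≤ a ^ (-α) * ((p-1) / ((n:ℝ) - p)) ^ ((p-1)/p) := by
    have h1 : (∫ x in Set.Ioc a b, x ^ d) ^ (1/q)
        ≤ (a ^ (d+1) * ((p-1) / ((n:ℝ) - p))) ^ (1/q) :=
      Real.rpow_le_rpow hB0 hB_le (by positivity)
    have h2 : (a ^ (d+1) * ((p-1) / ((n:ℝ) - p))) ^ (1/q)
        = a ^ (-α) * ((p-1) / ((n:ℝ) - p)) ^ ((p-1)/p) := by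
      rw [h1q, Real.mul_rpow (Real.rpow_nonneg ha0.le _) (by positivity),
        ← Real.rpow_mul ha0.le]
      congr 2
      rw [hd1, hαdef]; field_simp; try ring
    rw [← h2]; exact h1
  -- a ^ (-α) bound
  have ha_neg : a ^ (-α) ≤ 2 ^ α * r ^ (-α) := by
    have h1 : a ^ (-α) ≤ (r/2) ^ (-α) :=
      Real.rpow_le_rpow_of_nonpos (by linarith) hra (by linarith)
    have h2 : (r/2) ^ (-α) = 2 ^ α * r ^ (-α) := by
      rw [Real.div_rpow hr0.le (by norm_num), Real.rpow_neg (by norm_num : (0:ℝ) ≤ 2),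
        div_eq_mul_inv, inv_inv, mul_comm]
    rw [← h2]; exact h1
  -- assemble the Hölder bound
  set C₁ : ℝ := ((p-1) / ((n:ℝ) - p)) ^ ((p-1)/p) with hC₁def
  have hC₁0 : 0 ≤ C₁ := Real.rpow_nonneg (by positivity) _
  have hI : ∫ x in Set.Ioc a b, |deriv v x|
      ≤ K * (omegaSphere n) ^ (-(1/p)) * 2 ^ α * C₁ * r ^ (-α) := by
    rw [← heq1]
    calc ∫ x in Set.Ioc a b, f x * g x
        ≤ (∫ x in Set.Ioc a b, f x ^ p) ^ (1/p) * (∫ x in Set.Ioc a b, g x ^ q) ^ (1/q) := hHold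
      _ = (∫ x in Set.Ioc a b, F x) ^ (1/p) * (∫ x in Set.Ioc a b, x ^ d) ^ (1/q) := by
          rw [heq2, heq3]
      _ ≤ (K * (omegaSphere n) ^ (-(1/p))) * (a ^ (-α) * C₁) := by
          apply mul_le_mul hA1p hB1q (Real.rpow_nonneg hB0 _) (by positivity)
      _ ≤ (K * (omegaSphere n) ^ (-(1/p))) * ((2 ^ α * r ^ (-α)) * C₁) := by
          apply mul_le_mul_of_nonneg_left (mul_le_mul_of_nonneg_right ha_neg hC₁0) (by positivity)
      _ = K * (omegaSphere n) ^ (-(1/p)) * 2 ^ α * C₁ * r ^ (-α) := by ring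
  -- L term
  have hL2 : L ≤ L * R ^ α * r ^ (-α) := by
    have h1 : R ^ (-α) ≤ r ^ (-α) :=
      Real.rpow_le_rpow_of_nonpos hr0 hrR.le (by linarith)
    have h2 : (1:ℝ) = R ^ α * R ^ (-α) := by
      rw [← Real.rpow_add hR]; simp
    have h3 : (1:ℝ) ≤ R ^ α * r ^ (-α) := by
      rw [h2]
      exact mul_le_mul_of_nonneg_left h1 (Real.rpow_nonneg hR.le _)
    calc L = L * 1 := by ring
      _ ≤ L * (R ^ α * r ^ (-α)) := mul_le_mul_of_nonneg_left h3 hL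
      _ = L * R ^ α * r ^ (-α) := by ring
  linarith
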